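/- arXiv:2604.15263 — 3 statements merged into one kernel-verified Lean document; each statement's English description precedes it below -/
import Mathlib

section
/- Let H₀, W, W′ be Hermitian N×N complex matrices, set H := H₀ + W, H′ := H₀ + W′, and Δ := W − W′. Let β > 0 and suppose there exist ε ≥ 0 and c ≥ 0 such that |⟨ψ, Δψ⟩| ≤ ε ⟨ψ, H₀ψ⟩ + c ‖ψ‖² for all ψ ∈ ℂᴺ. Then |F_β(H) − F_β(H′)| ≤ ε · max( Tr(σ_β(H) H₀), Tr(σ_β(H′) H₀) ) + c. -/
/-!
Peierls–Bogoliubov inequality: if `(uₖ)` is the eigenbasis of `A`, Jensen's inequality for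
`exp` in the spectral decomposition of `A'` gives `⟨uₖ, e^{-βA'} uₖ⟩ ≥ e^{-β⟨uₖ, A' uₖ⟩}`, and a
second application of Jensen, now to the Gibbs weights `e^{-βλₖ}/Z_β(A)` of `A`, gives
`Z_β(A') ≥ Z_β(A) e^{-β Tr(σ_β(A)(A' - A))}`, i.e. `F_β(A') - F_β(A) ≤ Tr(σ_β(A)(A' - A))`.
Applied with `(A, A') = (H', H)` and `(H, H')`, this bounds `F_β(H) - F_β(H')` above by
`Tr(σ_β(H')Δ)` and below by `Tr(σ_β(H)Δ)`. Finally `Tr(σ_β(X)Δ)` is the Gibbs-weighted average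
of `⟨uₖ, Δ uₖ⟩` over the eigenvectors of `X`, so the form bound on each `uₖ` averages to
`|Tr(σ_β(X)Δ)| ≤ ε Tr(σ_β(X)H₀) + c`.
-/

open Matrix

/-- Partition function `Z_β(X) = Tr(e^{−βX})` (a real number, as the real part
of the trace; for Hermitian `X` the trace is real). -/
noncomputable def partitionZ {N : ℕ} (β : ℝ) (X : Matrix (Fin N) (Fin N) ℂ) : ℝ :=
  (Matrix.trace (NormedSpace.exp ((-β : ℂ) • X))).re

/-- Gibbs state `σ_β(X) = e^{−βX}/Z_β(X)`. -/
noncomputable def gibbs {N : ℕ} (β : ℝ) (X : Matrix (Fin N) (Fin N) ℂ) :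
    Matrix (Fin N) (Fin N) ℂ :=
  ((partitionZ β X : ℝ) : ℂ)⁻¹ • NormedSpace.exp ((-β : ℂ) • X)

/-- Free energy `F_β(X) = −β⁻¹ log Z_β(X)`. -/
noncomputable def freeEnergy {N : ℕ} (β : ℝ) (X : Matrix (Fin N) (Fin N) ℂ) : ℝ :=
  -β⁻¹ * Real.log (partitionZ β X)

theorem abs_sum_mul_le_of_abs_le {ι : Type*} [Fintype ι] {p d h : ι → ℝ} {ε c : ℝ}
    (hp : ∀ k, 0 ≤ p k) (hp₁ : ∑ k, p k = 1) (hd : ∀ k, |d k| ≤ ε * h k + c) :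
    |∑ k, p k * d k| ≤ ε * ∑ k, p k * h k + c :=
  calc |∑ k, p k * d k| ≤ ∑ k, p k * |d k| := by
        refine (Finset.abs_sum_le_sum_abs _ _).trans_eq (Finset.sum_congr rfl fun k _ => ?_)
        rw [abs_mul, abs_of_nonneg (hp k)]
    _ ≤ ∑ k, p k * (ε * h k + c) :=
        Finset.sum_le_sum fun k _ => mul_le_mul_of_nonneg_left (hd k) (hp k)
    _ = ε * ∑ k, p k * h k + c * ∑ k, p k := by
        rw [Finset.mul_sum, Finset.mul_sum, ← Finset.sum_add_distrib]
        exact Finset.sum_congr rfl fun k _ => by ring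
    _ = ε * ∑ k, p k * h k + c := by rw [hp₁, mul_one]

namespace OrthonormalBasis

variable {𝕜 m : Type*} [RCLike 𝕜] [Fintype m]

theorem star_dotProduct_self (b : OrthonormalBasis m 𝕜 (EuclideanSpace 𝕜 m)) (k : m) :
    star ⇑(b k) ⬝ᵥ ⇑(b k) = 1 := by
  rw [dotProduct_comm, ← EuclideanSpace.inner_eq_star_dotProduct, inner_self_eq_norm_sq_to_K,
    b.norm_eq_one k]
  simp

theorem sum_norm_sq_apply (b : OrthonormalBasis m 𝕜 (EuclideanSpace 𝕜 m)) (k : m) :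
    ∑ i, ‖b k i‖ ^ 2 = 1 := by
  have h := b.norm_eq_one k
  rwa [EuclideanSpace.norm_eq, Real.sqrt_eq_one] at h

end OrthonormalBasis

namespace Matrix

variable {m : Type*} [Fintype m] [DecidableEq m]

theorem trace_eq_sum_star_dotProduct_mulVec {𝕜 : Type*} [RCLike 𝕜]
    (b : OrthonormalBasis m 𝕜 (EuclideanSpace 𝕜 m)) (E : Matrix m m 𝕜) :
    trace E = ∑ k, star ⇑(b k) ⬝ᵥ E *ᵥ ⇑(b k) := by
  set V : Matrix m m 𝕜 := (EuclideanSpace.basisFun m 𝕜).toBasis.toMatrix b.toBasis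
  have hV : V * star V = 1 := Unitary.mul_star_self_of_mem
    ((EuclideanSpace.basisFun m 𝕜).toMatrix_orthonormalBasis_mem_unitary b)
  calc trace E = trace (star V * E * V) := by
        rw [mul_assoc, trace_mul_comm, mul_assoc, hV, mul_one]
    _ = ∑ k, star ⇑(b k) ⬝ᵥ E *ᵥ ⇑(b k) :=
        Finset.sum_congr rfl fun k _ => mul_mul_apply _ _ _ k k

theorem re_star_dotProduct_conj_diagonal_mulVec (U : unitaryGroup m ℂ) (r : m → ℝ)
    (v : m → ℂ) :
    (star v ⬝ᵥ ((U : Matrix m m ℂ) * diagonal (fun k => (r k : ℂ)) * star (U : Matrix m m ℂ))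
        *ᵥ v).re = ∑ k, r k * ‖(star (U : Matrix m m ℂ) *ᵥ v) k‖ ^ 2 := by
  set w := star (U : Matrix m m ℂ) *ᵥ v
  have hw : star v ᵥ* (U : Matrix m m ℂ) = star w := by
    rw [star_mulVec, star_eq_conjTranspose, conjTranspose_conjTranspose]
  rw [← mulVec_mulVec, ← mulVec_mulVec, dotProduct_mulVec, hw]
  simp only [dotProduct, mulVec_diagonal, Pi.star_apply, Complex.re_sum]
  refine Finset.sum_congr rfl fun k _ => ?_
  rw [RCLike.star_def, mul_left_comm, RCLike.conj_mul, Complex.re_ofReal_mul]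
  norm_cast

namespace IsHermitian

variable {X : Matrix m m ℂ}

theorem exp_real_smul (hX : X.IsHermitian) (t : ℝ) :
    NormedSpace.exp ((t : ℂ) • X) = (hX.eigenvectorUnitary : Matrix m m ℂ) *
      diagonal (fun k => (Real.exp (t * hX.eigenvalues k) : ℂ)) *
        star (hX.eigenvectorUnitary : Matrix m m ℂ) := by
  set U := hX.eigenvectorUnitary
  have hinv : (U : Matrix m m ℂ)⁻¹ = star (U : Matrix m m ℂ) :=
    inv_eq_left_inv (Unitary.coe_star_mul_self U)
  have hconj : (t : ℂ) • X =
      U * diagonal (fun k => ((t * hX.eigenvalues k : ℝ) : ℂ)) * (U : Matrix m m ℂ)⁻¹ := by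
    conv_lhs => rw [hX.spectral_theorem, Unitary.conjStarAlgAut_apply]
    rw [hinv, ← Matrix.smul_mul, ← Matrix.mul_smul, ← diagonal_smul]
    congr 3
    ext k
    simp
  rw [hconj, exp_conj (U : Matrix m m ℂ) _ (Unitary.toUnits U).isUnit, exp_diagonal, hinv,
    Pi.exp_def]
  simp only [← Complex.exp_eq_exp_ℂ, Complex.ofReal_exp]

theorem exp_real_smul_mulVec_eigenvectorBasis (hX : X.IsHermitian) (t : ℝ) (k : m) :
    NormedSpace.exp ((t : ℂ) • X) *ᵥ ⇑(hX.eigenvectorBasis k) =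
      (Real.exp (t * hX.eigenvalues k) : ℂ) • ⇑(hX.eigenvectorBasis k) := by
  rw [hX.exp_real_smul, ← mulVec_mulVec, ← mulVec_mulVec, star_eigenvectorUnitary_mulVec,
    diagonal_mulVec_single, ← eigenvectorUnitary_mulVec, ← mulVec_smul, ← Pi.single_smul,
    smul_eq_mul]

theorem trace_mul_exp_real_smul (hX : X.IsHermitian) (B : Matrix m m ℂ) (t : ℝ) :
    trace (B * NormedSpace.exp ((t : ℂ) • X)) =
      ∑ k, (Real.exp (t * hX.eigenvalues k) : ℂ) *
        (star ⇑(hX.eigenvectorBasis k) ⬝ᵥ B *ᵥ ⇑(hX.eigenvectorBasis k)) := by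
  rw [trace_eq_sum_star_dotProduct_mulVec hX.eigenvectorBasis]
  refine Finset.sum_congr rfl fun k _ => ?_
  rw [← mulVec_mulVec, hX.exp_real_smul_mulVec_eigenvectorBasis, mulVec_smul, dotProduct_smul,
    smul_eq_mul]

theorem exp_mul_re_dotProduct_mulVec_le (hX : X.IsHermitian) (t : ℝ) {v : m → ℂ}
    (hv : star v ⬝ᵥ v = 1) :
    Real.exp (t * (star v ⬝ᵥ X *ᵥ v).re) ≤
      (star v ⬝ᵥ NormedSpace.exp ((t : ℂ) • X) *ᵥ v).re := by
  have hspec := re_star_dotProduct_conj_diagonal_mulVec hX.eigenvectorUnitary (m := m)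
  set p : m → ℝ := fun k => ‖(star (hX.eigenvectorUnitary : Matrix m m ℂ) *ᵥ v) k‖ ^ 2
  have hp : ∑ k, p k = 1 := by
    have h := hspec (fun _ => 1) v
    simp only [Complex.ofReal_one, diagonal_one, mul_one, one_mul,
      Unitary.mul_star_self_of_mem hX.eigenvectorUnitary.2, one_mulVec, hv, Complex.one_re] at h
    exact h.symm
  have hX_form : (star v ⬝ᵥ X *ᵥ v).re = ∑ k, p k * hX.eigenvalues k := by
    conv_lhs => rw [hX.spectral_theorem, Unitary.conjStarAlgAut_apply]
    exact (hspec hX.eigenvalues v).trans (Finset.sum_congr rfl fun k _ => mul_comm _ _)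
  have hexp_form : (star v ⬝ᵥ NormedSpace.exp ((t : ℂ) • X) *ᵥ v).re =
      ∑ k, p k * Real.exp (t * hX.eigenvalues k) := by
    rw [hX.exp_real_smul]
    exact (hspec _ v).trans (Finset.sum_congr rfl fun k _ => mul_comm _ _)
  rw [hX_form, hexp_form, Finset.mul_sum]
  simp_rw [mul_left_comm t]
  exact convexOn_exp.map_sum_le (fun k _ => sq_nonneg _) hp fun _ _ => Set.mem_univ _

theorem sum_exp_mul_re_dotProduct_mulVec_le_re_trace_exp (hX : X.IsHermitian) (t : ℝ)
    (b : OrthonormalBasis m ℂ (EuclideanSpace ℂ m)) :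
    ∑ k, Real.exp (t * (star ⇑(b k) ⬝ᵥ X *ᵥ ⇑(b k)).re) ≤
      (trace (NormedSpace.exp ((t : ℂ) • X))).re := by
  rw [trace_eq_sum_star_dotProduct_mulVec b, Complex.re_sum]
  exact Finset.sum_le_sum fun k _ =>
    hX.exp_mul_re_dotProduct_mulVec_le t (b.star_dotProduct_self k)

end IsHermitian

end Matrix

section Gibbs

variable {n : ℕ}

theorem partitionZ_eq_re_trace_exp (β : ℝ) (X : Matrix (Fin n) (Fin n) ℂ) :
    partitionZ β X = (trace (NormedSpace.exp (((-β : ℝ) : ℂ) • X))).re := by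
  rw [partitionZ, Complex.ofReal_neg]

namespace Matrix.IsHermitian

variable {X : Matrix (Fin n) (Fin n) ℂ}

theorem partitionZ_eq_sum (hX : X.IsHermitian) (β : ℝ) :
    partitionZ β X = ∑ k, Real.exp (-β * hX.eigenvalues k) := by
  have h := hX.trace_mul_exp_real_smul 1 (-β)
  simp only [one_mul, one_mulVec, OrthonormalBasis.star_dotProduct_self, mul_one] at h
  rw [partitionZ_eq_re_trace_exp, h, Complex.re_sum]
  rfl

theorem partitionZ_pos (hX : X.IsHermitian) (hn : 0 < n) (β : ℝ) : 0 < partitionZ β X := by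
  have : Nonempty (Fin n) := Fin.pos_iff_nonempty.mp hn
  rw [hX.partitionZ_eq_sum]
  exact Finset.sum_pos (fun k _ => Real.exp_pos _) Finset.univ_nonempty

noncomputable def gibbsWeight (hX : X.IsHermitian) (β : ℝ) (k : Fin n) : ℝ :=
  Real.exp (-β * hX.eigenvalues k) / partitionZ β X

theorem gibbsWeight_nonneg (hX : X.IsHermitian) (β : ℝ) (k : Fin n) :
    0 ≤ hX.gibbsWeight β k := by
  rw [gibbsWeight, hX.partitionZ_eq_sum]
  positivity

theorem sum_gibbsWeight (hX : X.IsHermitian) (hn : 0 < n) (β : ℝ) :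
    ∑ k, hX.gibbsWeight β k = 1 := by
  simp only [gibbsWeight]
  rw [← Finset.sum_div, ← hX.partitionZ_eq_sum, div_self (hX.partitionZ_pos hn β).ne']

theorem re_trace_gibbs_mul (hX : X.IsHermitian) (β : ℝ) (B : Matrix (Fin n) (Fin n) ℂ) :
    (trace (gibbs β X * B)).re = ∑ k, hX.gibbsWeight β k *
      (star ⇑(hX.eigenvectorBasis k) ⬝ᵥ B *ᵥ ⇑(hX.eigenvectorBasis k)).re := by
  rw [gibbs, Matrix.smul_mul, trace_smul, trace_mul_comm, ← Complex.ofReal_neg,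
    hX.trace_mul_exp_real_smul, smul_eq_mul, ← Complex.ofReal_inv, Complex.re_ofReal_mul,
    Complex.re_sum, Finset.mul_sum]
  refine Finset.sum_congr rfl fun k _ => ?_
  rw [Complex.re_ofReal_mul, gibbsWeight, div_eq_inv_mul, mul_assoc]

end Matrix.IsHermitian

theorem partitionZ_mul_exp_le_partitionZ {A A' : Matrix (Fin n) (Fin n) ℂ}
    (hA : A.IsHermitian) (hA' : A'.IsHermitian) (hn : 0 < n) (β : ℝ) :
    partitionZ β A * Real.exp (-β * (trace (gibbs β A * (A' - A))).re) ≤ partitionZ β A' := by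
  set b := hA.eigenvectorBasis
  set p := hA.gibbsWeight β
  set d : Fin n → ℝ := fun k => (star ⇑(b k) ⬝ᵥ (A' - A) *ᵥ ⇑(b k)).re
  have hZ : partitionZ β A ≠ 0 := (hA.partitionZ_pos hn β).ne'
  have hA'_form : ∀ k, (star ⇑(b k) ⬝ᵥ A' *ᵥ ⇑(b k)).re = hA.eigenvalues k + d k := fun k => by
    simp only [d, b, sub_mulVec, dotProduct_sub, Complex.sub_re, hA.eigenvalues_eq k,
      RCLike.re_to_complex]
    ring
  have jensen : Real.exp (∑ k, p k * (-β * d k)) ≤ ∑ k, p k * Real.exp (-β * d k) :=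
    convexOn_exp.map_sum_le (fun k _ => hA.gibbsWeight_nonneg β k) (hA.sum_gibbsWeight hn β)
      fun _ _ => Set.mem_univ _
  calc partitionZ β A * Real.exp (-β * (trace (gibbs β A * (A' - A))).re)
      = partitionZ β A * Real.exp (∑ k, p k * (-β * d k)) := by
        rw [hA.re_trace_gibbs_mul, Finset.mul_sum]
        simp_rw [mul_left_comm (-β)]
        rfl
    _ ≤ partitionZ β A * ∑ k, p k * Real.exp (-β * d k) :=
        mul_le_mul_of_nonneg_left jensen (hA.partitionZ_pos hn β).le
    _ = ∑ k, Real.exp (-β * (star ⇑(b k) ⬝ᵥ A' *ᵥ ⇑(b k)).re) := by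
        rw [Finset.mul_sum]
        refine Finset.sum_congr rfl fun k _ => ?_
        rw [hA'_form, mul_add, Real.exp_add, ← mul_assoc]
        simp only [p, Matrix.IsHermitian.gibbsWeight, mul_div_cancel₀ _ hZ]
    _ ≤ partitionZ β A' := by
        rw [partitionZ_eq_re_trace_exp]
        exact hA'.sum_exp_mul_re_dotProduct_mulVec_le_re_trace_exp (-β) b

theorem freeEnergy_sub_le_re_trace_gibbs_mul {A A' : Matrix (Fin n) (Fin n) ℂ} {β : ℝ}
    (hA : A.IsHermitian) (hA' : A'.IsHermitian) (hn : 0 < n) (hβ : 0 < β) :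
    freeEnergy β A' - freeEnergy β A ≤ (trace (gibbs β A * (A' - A))).re := by
  set S := (trace (gibbs β A * (A' - A))).re
  have hZ := hA.partitionZ_pos hn β
  have hlog := Real.log_le_log (by positivity) (partitionZ_mul_exp_le_partitionZ hA hA' hn β)
  rw [Real.log_mul hZ.ne' (Real.exp_pos _).ne', Real.log_exp] at hlog
  calc freeEnergy β A' - freeEnergy β A
      = β⁻¹ * (Real.log (partitionZ β A) - Real.log (partitionZ β A')) := by
        rw [freeEnergy, freeEnergy]; ring
    _ ≤ β⁻¹ * (β * S) := by gcongr; linarith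
    _ = S := inv_mul_cancel_left₀ hβ.ne' S

theorem abs_re_trace_gibbs_mul_le {X D H₀ : Matrix (Fin n) (Fin n) ℂ} (hX : X.IsHermitian)
    (hn : 0 < n) (β : ℝ) {ε c : ℝ}
    (hform : ∀ ψ : Fin n → ℂ,
      |(star ψ ⬝ᵥ D *ᵥ ψ).re| ≤ ε * (star ψ ⬝ᵥ H₀ *ᵥ ψ).re + c * ∑ i, ‖ψ i‖ ^ 2) :
    |(trace (gibbs β X * D)).re| ≤ ε * (trace (gibbs β X * H₀)).re + c := by
  rw [hX.re_trace_gibbs_mul, hX.re_trace_gibbs_mul]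
  refine abs_sum_mul_le_of_abs_le (hX.gibbsWeight_nonneg β) (hX.sum_gibbsWeight hn β) fun k => ?_
  simpa [OrthonormalBasis.sum_norm_sq_apply] using hform (hX.eigenvectorBasis k)

end Gibbs

/-- **Free energy perturbation bound under relative form smallness.**
If `|⟨ψ,Δψ⟩| ≤ ε⟨ψ,H₀ψ⟩ + c‖ψ‖²` for all `ψ`, where `Δ = W − W′`, then
`|F_β(H₀+W) − F_β(H₀+W′)| ≤ ε·max(Tr(σ_β(H)H₀), Tr(σ_β(H′)H₀)) + c`. -/
theorem freeEnergy_perturbation_bound (N : ℕ)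
    (H₀ W W' : Matrix (Fin N) (Fin N) ℂ)
    (hH₀ : H₀.IsHermitian) (hW : W.IsHermitian) (hW' : W'.IsHermitian)
    (β : ℝ) (hβ : 0 < β) (ε c : ℝ) (hε : 0 ≤ ε) (hc : 0 ≤ c)
    (hform : ∀ ψ : Fin N → ℂ,
      |((star ψ) ⬝ᵥ ((W - W').mulVec ψ)).re|
        ≤ ε * ((star ψ) ⬝ᵥ (H₀.mulVec ψ)).re + c * ∑ i, ‖ψ i‖ ^ 2) :
    |freeEnergy β (H₀ + W) - freeEnergy β (H₀ + W')|
      ≤ ε * max (Matrix.trace (gibbs β (H₀ + W) * H₀)).re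
            (Matrix.trace (gibbs β (H₀ + W') * H₀)).re
        + c := by
  rcases N.eq_zero_or_pos with rfl | hN
  · -- every trace of a `0 × 0` matrix vanishes and `Real.log 0 = 0`
    simp [freeEnergy, partitionZ, Matrix.trace, hc]
  have hH := hH₀.add hW
  have hH' := hH₀.add hW'
  have upper := freeEnergy_sub_le_re_trace_gibbs_mul hH' hH hN hβ
  have lower := freeEnergy_sub_le_re_trace_gibbs_mul hH hH' hN hβ
  rw [add_sub_add_left_eq_sub] at upper lower
  rw [← neg_sub W, Matrix.mul_neg, trace_neg, Complex.neg_re] at lower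
  have bound := abs_re_trace_gibbs_mul_le hH' hN β hform
  have bound' := abs_re_trace_gibbs_mul_le hH hN β hform
  set T := (trace (gibbs β (H₀ + W) * H₀)).re
  set T' := (trace (gibbs β (H₀ + W') * H₀)).re
  have hT : ε * T ≤ ε * max T T' := mul_le_mul_of_nonneg_left (le_max_left T T') hε
  have hT' : ε * T' ≤ ε * max T T' := mul_le_mul_of_nonneg_left (le_max_right T T') hε
  rw [abs_sub_le_iff]
  constructor
  · linarith [le_abs_self (trace (gibbs β (H₀ + W') * (W - W'))).re]
  · linarith [neg_abs_le (trace (gibbs β (H₀ + W) * (W - W'))).re]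
end

section
/- Let H₀, W, W′ be Hermitian N×N complex matrices, set H := H₀ + W, H′ := H₀ + W′, and Δ := W − W′. Let β > 0 and suppose there exist ε ≥ 0 and c ≥ 0 such that |⟨ψ, Δψ⟩| ≤ ε ⟨ψ, H₀ψ⟩ + c ‖ψ‖² for all ψ ∈ ℂᴺ. Then both D( σ_β(H) ‖ σ_β(H′) ) and D( σ_β(H′) ‖ σ_β(H) ) are bounded above by β · ( ε Tr(σ_β(H) H₀) + ε Tr(σ_β(H′) H₀) + 2c ). -/
open Matrix

/-- Matrix logarithm of a Hermitian matrix, via the spectral theorem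
(functional calculus with `Real.log` on the eigenvalues); junk value `0`
on non-Hermitian matrices. -/
noncomputable def matLog {N : ℕ} (X : Matrix (Fin N) (Fin N) ℂ) :
    Matrix (Fin N) (Fin N) ℂ :=
  if hX : X.IsHermitian then
    (hX.eigenvectorUnitary : Matrix (Fin N) (Fin N) ℂ) *
      Matrix.diagonal (fun i => (Real.log (hX.eigenvalues i) : ℂ)) *
      star (hX.eigenvectorUnitary : Matrix (Fin N) (Fin N) ℂ)
  else 0

/-- Quantum relative entropy `D(ρ‖σ) = Tr(ρ(log ρ − log σ))`. -/
noncomputable def relEntropy {N : ℕ} (ρ σ : Matrix (Fin N) (Fin N) ℂ) : ℝ :=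
  (Matrix.trace (ρ * (matLog ρ - matLog σ))).re

/-! Since `log σ_β(X) = -βX - log Z_β(X)` and Gibbs states have unit trace, the symmetrized
relative entropy `D(ρ‖σ) + D(σ‖ρ) = Tr((ρ - σ)(log ρ - log σ))` of `ρ = σ_β(H₀ + W)` and
`σ = σ_β(H₀ + W')` collapses to `β (Tr(σΔ) - Tr(ρΔ))`. Both relative entropies are nonnegative
(Klein's inequality), so each is at most this sum. Finally, evaluating the form bound on the
eigenvectors of a Gibbs state and averaging with its eigenvalues as weights gives
`|Tr(ρΔ)| ≤ ε Tr(ρH₀) + c`. -/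

open scoped InnerProductSpace ComplexOrder

lemma sub_le_mul_log_sub_log {p q : ℝ} (hp : 0 < p) (hq : 0 < q) :
    p - q ≤ p * (Real.log p - Real.log q) := by
  have h := Real.one_sub_inv_le_log_of_pos (div_pos hp hq)
  rw [Real.log_div hp.ne' hq.ne', inv_div] at h
  calc p - q = p * (1 - q / p) := by field_simp
    _ ≤ p * (Real.log p - Real.log q) := mul_le_mul_of_nonneg_left h hp.le

lemma sum_sub_sum_le_sum_mul_log_sub {ι : Type*} [Fintype ι] [DecidableEq ι]
    {w : Matrix ι ι ℝ} (hw : w ∈ doublyStochastic ℝ ι) {p q : ι → ℝ}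
    (hp : ∀ i, 0 < p i) (hq : ∀ j, 0 < q j) :
    ∑ i, p i - ∑ j, q j ≤ ∑ i, p i * (Real.log (p i) - ∑ j, w i j * Real.log (q j)) := by
  obtain ⟨hw0, hrow, hcol⟩ := mem_doublyStochastic_iff_sum.mp hw
  calc ∑ i, p i - ∑ j, q j = ∑ i, ∑ j, w i j * (p i - q j) := by
        simp only [mul_sub, Finset.sum_sub_distrib, ← Finset.sum_mul, hrow, one_mul]
        rw [Finset.sum_comm]
        simp only [← Finset.sum_mul, hcol, one_mul]
    _ ≤ ∑ i, ∑ j, w i j * (p i * (Real.log (p i) - Real.log (q j))) := by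
        gcongr with i _ j _
        · exact hw0 i j
        · exact sub_le_mul_log_sub_log (hp i) (hq j)
    _ = ∑ i, p i * (Real.log (p i) - ∑ j, w i j * Real.log (q j)) := by
        refine Finset.sum_congr rfl fun i _ => ?_
        simp only [mul_sub, Finset.mul_sum, Finset.sum_sub_distrib, ← Finset.sum_mul, hrow]
        rw [one_mul]
        exact congrArg _ (Finset.sum_congr rfl fun j _ => by ring)

lemma OrthonormalBasis.norm_sq_inner_mem_doublyStochastic {ι 𝕜 E : Type*} [Fintype ι]
    [DecidableEq ι] [RCLike 𝕜] [NormedAddCommGroup E] [InnerProductSpace 𝕜 E]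
    (b c : OrthonormalBasis ι 𝕜 E) :
    Matrix.of (fun i j => ‖⟪c j, b i⟫_𝕜‖ ^ 2) ∈ doublyStochastic ℝ ι := by
  refine mem_doublyStochastic_iff_sum.mpr ⟨fun _ _ => sq_nonneg _, fun i => ?_, fun j => ?_⟩
  · simp [c.sum_sq_norm_inner_right, b.orthonormal.1 i]
  · simp [b.sum_sq_norm_inner_left, c.orthonormal.1 j]

namespace Matrix.IsHermitian

variable {n 𝕜 : Type*} [RCLike 𝕜] [Fintype n] [DecidableEq n] {A : Matrix n n 𝕜}
  (hA : A.IsHermitian)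

lemma star_eigenvectorBasis_dotProduct_self (i : n) :
    star ⇑(hA.eigenvectorBasis i) ⬝ᵥ ⇑(hA.eigenvectorBasis i) = 1 := by
  rw [dotProduct_comm, ← EuclideanSpace.inner_eq_star_dotProduct, inner_self_eq_norm_sq_to_K,
    hA.eigenvectorBasis.orthonormal.1 i]
  simp

lemma cfc_mulVec_eigenvectorBasis (f : ℝ → ℝ) (j : n) :
    hA.cfc f *ᵥ ⇑(hA.eigenvectorBasis j) = f (hA.eigenvalues j) • ⇑(hA.eigenvectorBasis j) := by
  rw [Matrix.IsHermitian.cfc, Unitary.conjStarAlgAut_apply, ← mulVec_mulVec, ← mulVec_mulVec,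
    star_eigenvectorUnitary_mulVec, diagonal_mulVec_single, mul_one, ← eigenvectorUnitary_mulVec,
    ← mulVec_smul, RCLike.real_smul_eq_coe_smul (K := 𝕜), ← Pi.single_smul, smul_eq_mul, mul_one]
  rfl

lemma dotProduct_cfc_mulVec_eigenvectorBasis (f : ℝ → ℝ) (i : n) :
    star ⇑(hA.eigenvectorBasis i) ⬝ᵥ hA.cfc f *ᵥ ⇑(hA.eigenvectorBasis i)
      = f (hA.eigenvalues i) := by
  rw [cfc_mulVec_eigenvectorBasis, dotProduct_smul, star_eigenvectorBasis_dotProduct_self,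
    RCLike.real_smul_eq_coe_smul (K := 𝕜), smul_eq_mul, mul_one]

lemma dotProduct_cfc_mulVec (f : ℝ → ℝ) (v : EuclideanSpace 𝕜 n) :
    star ⇑v ⬝ᵥ hA.cfc f *ᵥ ⇑v
      = ∑ j, ((f (hA.eigenvalues j) * ‖⟪hA.eigenvectorBasis j, v⟫_𝕜‖ ^ 2 : ℝ) : 𝕜) := by
  have hw : ∀ j, (star (hA.eigenvectorUnitary : Matrix n n 𝕜) *ᵥ ⇑v) j
      = ⟪hA.eigenvectorBasis j, v⟫_𝕜 := fun j => by
    rw [EuclideanSpace.inner_eq_star_dotProduct, dotProduct_comm]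
    simp [mulVec, dotProduct, star_apply]
  have hv : star ⇑v ᵥ* (hA.eigenvectorUnitary : Matrix n n 𝕜)
      = star (star (hA.eigenvectorUnitary : Matrix n n 𝕜) *ᵥ ⇑v) := by
    rw [star_mulVec, ← star_eq_conjTranspose, star_star]
  rw [Matrix.IsHermitian.cfc, Unitary.conjStarAlgAut_apply, ← mulVec_mulVec, ← mulVec_mulVec,
    dotProduct_mulVec, hv]
  simp only [dotProduct, mulVec_diagonal, Pi.star_apply, hw]
  refine Finset.sum_congr rfl fun j _ => ?_
  rw [Function.comp_apply, Function.comp_apply, RCLike.ofReal_mul, RCLike.ofReal_pow,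
    ← RCLike.conj_mul, RCLike.star_def]
  ring

lemma trace_eq_sum_dotProduct_eigenvectorBasis (M : Matrix n n 𝕜) :
    trace M = ∑ i, star ⇑(hA.eigenvectorBasis i) ⬝ᵥ M *ᵥ ⇑(hA.eigenvectorBasis i) := by
  set U : Matrix n n 𝕜 := (hA.eigenvectorUnitary : Matrix n n 𝕜)
  calc trace M = trace (star U * M * U) := by
        rw [trace_mul_cycle, mem_unitaryGroup_iff.mp hA.eigenvectorUnitary.2, one_mul]
    _ = _ := by
        simp only [trace, diag_apply, mul_apply, star_apply, dotProduct, mulVec, U,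
          eigenvectorUnitary_apply, Finset.mul_sum, Pi.star_apply, mul_assoc]

lemma trace_mul_eq_sum (M : Matrix n n 𝕜) :
    trace (A * M) = ∑ i, (hA.eigenvalues i : 𝕜) *
      (star ⇑(hA.eigenvectorBasis i) ⬝ᵥ M *ᵥ ⇑(hA.eigenvectorBasis i)) := by
  rw [trace_mul_comm, hA.trace_eq_sum_dotProduct_eigenvectorBasis]
  refine Finset.sum_congr rfl fun i _ => ?_
  rw [← mulVec_mulVec, mulVec_eigenvectorBasis, mulVec_smul, dotProduct_smul,
    RCLike.real_smul_eq_coe_smul (K := 𝕜), smul_eq_mul]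

lemma trace_cfc (f : ℝ → ℝ) : trace (hA.cfc f) = ∑ i, (f (hA.eigenvalues i) : 𝕜) := by
  simp only [hA.trace_eq_sum_dotProduct_eigenvectorBasis, dotProduct_cfc_mulVec_eigenvectorBasis]

end Matrix.IsHermitian

theorem abs_re_trace_mul_le {n : Type*} [Fintype n] [DecidableEq n] {ρ A B : Matrix n n ℂ}
    (hρ : ρ.PosSemidef) {ε c : ℝ}
    (hform : ∀ ψ : n → ℂ,
      |(star ψ ⬝ᵥ A *ᵥ ψ).re| ≤ ε * (star ψ ⬝ᵥ B *ᵥ ψ).re + c * ∑ i, ‖ψ i‖ ^ 2) :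
    |(trace (ρ * A)).re| ≤ ε * (trace (ρ * B)).re + c * (trace ρ).re := by
  have hρH : ρ.IsHermitian := hρ.isHermitian
  have hre : ∀ M, (trace (ρ * M)).re = ∑ i, hρH.eigenvalues i *
      (star ⇑(hρH.eigenvectorBasis i) ⬝ᵥ M *ᵥ ⇑(hρH.eigenvectorBasis i)).re := fun M => by
    simp only [hρH.trace_mul_eq_sum, Complex.re_sum, RCLike.ofReal_eq_complex_ofReal,
      Complex.re_ofReal_mul]
  have hunit : ∀ i, ∑ k, ‖hρH.eigenvectorBasis i k‖ ^ 2 = 1 := fun i => by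
    rw [← EuclideanSpace.norm_sq_eq, hρH.eigenvectorBasis.orthonormal.1 i, one_pow]
  rw [hre, hre, hρH.trace_eq_sum_eigenvalues, Complex.re_sum]
  simp only [RCLike.ofReal_eq_complex_ofReal, Complex.ofReal_re, Finset.mul_sum]
  refine (Finset.abs_sum_le_sum_abs _ _).trans ?_
  rw [← Finset.sum_add_distrib]
  refine Finset.sum_le_sum fun i _ => ?_
  have hp := hρ.eigenvalues_nonneg i
  have h := hform (hρH.eigenvectorBasis i)
  rw [hunit, mul_one] at h
  rw [abs_mul, abs_of_nonneg hp]
  nlinarith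

lemma matLog_eq_cfc {N : ℕ} {X : Matrix (Fin N) (Fin N) ℂ} (hX : X.IsHermitian) :
    matLog X = cfc Real.log X := by
  rw [hX.cfc_eq, matLog, dif_pos hX]
  rfl

/-- Klein's inequality. In eigenbases `b` of `ρ` and `c` of `σ`, the weights `‖⟪c j, b i⟫‖ ^ 2`
form a doubly stochastic matrix, which reduces it to `p - q ≤ p (log p - log q)`. -/
theorem re_trace_sub_le_relEntropy {N : ℕ} {ρ σ : Matrix (Fin N) (Fin N) ℂ} (hρ : ρ.PosDef)
    (hσ : σ.PosDef) : (trace ρ).re - (trace σ).re ≤ relEntropy ρ σ := by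
  have hρH : ρ.IsHermitian := hρ.isHermitian
  have hσH : σ.IsHermitian := hσ.isHermitian
  have hlog : ∀ i,
      star ⇑(hρH.eigenvectorBasis i) ⬝ᵥ (matLog ρ - matLog σ) *ᵥ ⇑(hρH.eigenvectorBasis i)
        = ((Real.log (hρH.eigenvalues i) - ∑ j,
            ‖⟪hσH.eigenvectorBasis j, hρH.eigenvectorBasis i⟫_ℂ‖ ^ 2
              * Real.log (hσH.eigenvalues j) : ℝ) : ℂ) := by
    intro i
    rw [matLog_eq_cfc hρH, matLog_eq_cfc hσH, hρH.cfc_eq, hσH.cfc_eq, sub_mulVec, dotProduct_sub,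
      hρH.dotProduct_cfc_mulVec_eigenvectorBasis, hσH.dotProduct_cfc_mulVec]
    simp only [RCLike.ofReal_eq_complex_ofReal]
    push_cast
    simp only [mul_comm]
  rw [relEntropy, hρH.trace_mul_eq_sum, hρH.trace_eq_sum_eigenvalues, hσH.trace_eq_sum_eigenvalues]
  simp only [hlog, RCLike.ofReal_eq_complex_ofReal, ← Complex.ofReal_mul, ← Complex.ofReal_sum,
    Complex.ofReal_re]
  exact sum_sub_sum_le_sum_mul_log_sub
    (hρH.eigenvectorBasis.norm_sq_inner_mem_doublyStochastic hσH.eigenvectorBasis)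
    hρ.eigenvalues_pos hσ.eigenvalues_pos

section Gibbs

variable {N : ℕ} {X Y : Matrix (Fin N) (Fin N) ℂ}

-- `NormedSpace.exp` does not depend on a norm; the L² operator norm is opened only to apply
-- `CFC.real_exp_eq_normedSpace_exp`.
open scoped Matrix.Norms.L2Operator in
lemma exp_neg_smul_eq_cfc (hX : X.IsHermitian) (β : ℝ) :
    NormedSpace.exp ((-β : ℂ) • X) = cfc (fun x => Real.exp (-β * x)) X := by
  have hsa : IsSelfAdjoint X := hX
  rw [show (fun x : ℝ => Real.exp (-β * x)) = fun x => Real.exp ((-β) • x) from rfl,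
    cfc_comp_smul (-β) Real.exp X, CFC.real_exp_eq_normedSpace_exp, ← Complex.ofReal_neg,
    Complex.coe_smul]

lemma partitionZ_eq_sum (hX : X.IsHermitian) (β : ℝ) :
    partitionZ β X = ∑ i, Real.exp (-β * hX.eigenvalues i) := by
  rw [partitionZ, exp_neg_smul_eq_cfc hX, hX.cfc_eq, hX.trace_cfc, RCLike.ofReal_eq_complex_ofReal,
    ← Complex.ofReal_sum, Complex.ofReal_re]

lemma partitionZ_pos [NeZero N] (hX : X.IsHermitian) (β : ℝ) : 0 < partitionZ β X := by
  rw [partitionZ_eq_sum hX]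
  exact Finset.sum_pos (fun i _ => Real.exp_pos _) Finset.univ_nonempty

lemma gibbs_eq_cfc (hX : X.IsHermitian) (β : ℝ) :
    gibbs β X = cfc (fun x => Real.exp (-β * x) / partitionZ β X) X := by
  simp_rw [div_eq_inv_mul]
  rw [cfc_const_mul _ (fun x => Real.exp (-β * x)) X, gibbs, exp_neg_smul_eq_cfc hX,
    ← Complex.ofReal_inv, Complex.coe_smul]

open scoped MatrixOrder in
lemma gibbs_posDef [NeZero N] (hX : X.IsHermitian) (β : ℝ) : (gibbs β X).PosDef := by
  have hsa : IsSelfAdjoint X := hX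
  rw [← isStrictlyPositive_iff_posDef, gibbs_eq_cfc hX, cfc_isStrictlyPositive_iff _ X]
  exact fun x _ => div_pos (Real.exp_pos _) (partitionZ_pos hX β)

lemma trace_gibbs [NeZero N] (hX : X.IsHermitian) (β : ℝ) : trace (gibbs β X) = 1 := by
  rw [gibbs_eq_cfc hX, hX.cfc_eq, hX.trace_cfc, RCLike.ofReal_eq_complex_ofReal,
    ← Complex.ofReal_sum, ← Finset.sum_div, ← partitionZ_eq_sum hX,
    div_self (partitionZ_pos hX β).ne', Complex.ofReal_one]

lemma matLog_gibbs [NeZero N] (hX : X.IsHermitian) (β : ℝ) :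
    matLog (gibbs β X) = (-β) • X - algebraMap ℝ _ (Real.log (partitionZ β X)) := by
  have hsa : IsSelfAdjoint X := hX
  have hlog : (fun x => Real.log (Real.exp (-β * x) / partitionZ β X))
      = fun x => -β * x - Real.log (partitionZ β X) := funext fun x => by
    rw [Real.log_div (Real.exp_ne_zero _) (partitionZ_pos hX β).ne', Real.log_exp]
  rw [matLog_eq_cfc (gibbs_posDef hX β).isHermitian, gibbs_eq_cfc hX,
    ← cfc_comp' Real.log _ X ((Matrix.finite_real_spectrum.image _).continuousOn _), hlog,
    cfc_sub (fun x => -β * x) _ X, cfc_const_mul (-β) (fun x => x) X, cfc_id' ℝ X, cfc_const _ X]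

lemma relEntropy_add_relEntropy (ρ σ : Matrix (Fin N) (Fin N) ℂ) :
    relEntropy ρ σ + relEntropy σ ρ = (trace ((ρ - σ) * (matLog ρ - matLog σ))).re := by
  rw [relEntropy, relEntropy, ← Complex.add_re, ← trace_add]
  congr 2
  noncomm_ring

lemma relEntropy_gibbs_add_relEntropy_gibbs [NeZero N] (hX : X.IsHermitian) (hY : Y.IsHermitian)
    (β : ℝ) :
    relEntropy (gibbs β X) (gibbs β Y) + relEntropy (gibbs β Y) (gibbs β X)
      = β * ((trace (gibbs β Y * (X - Y))).re - (trace (gibbs β X * (X - Y))).re) := by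
  have hlog : matLog (gibbs β X) - matLog (gibbs β Y) = (-β) • (X - Y)
      + (Real.log (partitionZ β Y) - Real.log (partitionZ β X)) • 1 := by
    rw [matLog_gibbs hX, matLog_gibbs hY, Algebra.algebraMap_eq_smul_one,
      Algebra.algebraMap_eq_smul_one]
    module
  rw [relEntropy_add_relEntropy, hlog, mul_add, mul_smul_comm, mul_smul_comm, mul_one, trace_add,
    trace_smul, trace_smul, trace_sub (gibbs β X), trace_gibbs hX, trace_gibbs hY, sub_self,
    smul_zero, add_zero, Complex.smul_re, sub_mul, trace_sub, Complex.sub_re, smul_eq_mul]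
  ring

lemma relEntropy_gibbs_nonneg [NeZero N] (hX : X.IsHermitian) (hY : Y.IsHermitian) (β : ℝ) :
    0 ≤ relEntropy (gibbs β X) (gibbs β Y) := by
  simpa [trace_gibbs hX, trace_gibbs hY] using
    re_trace_sub_le_relEntropy (gibbs_posDef hX β) (gibbs_posDef hY β)

end Gibbs

theorem relEntropy_gibbs_perturbation_bound_general (N : ℕ)
    (H₀ W W' : Matrix (Fin N) (Fin N) ℂ)
    (hH₀ : H₀.IsHermitian) (hW : W.IsHermitian) (hW' : W'.IsHermitian)
    (β : ℝ) (hβ : 0 < β) (ε c : ℝ) (hc : 0 ≤ c)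
    (hform : ∀ ψ : Fin N → ℂ,
      |((star ψ) ⬝ᵥ ((W - W').mulVec ψ)).re|
        ≤ ε * ((star ψ) ⬝ᵥ (H₀.mulVec ψ)).re + c * ∑ i, ‖ψ i‖ ^ 2) :
    relEntropy (gibbs β (H₀ + W)) (gibbs β (H₀ + W'))
        ≤ β * (ε * (Matrix.trace (gibbs β (H₀ + W) * H₀)).re
            + ε * (Matrix.trace (gibbs β (H₀ + W') * H₀)).re + 2 * c) ∧
      relEntropy (gibbs β (H₀ + W')) (gibbs β (H₀ + W))
        ≤ β * (ε * (Matrix.trace (gibbs β (H₀ + W) * H₀)).re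
            + ε * (Matrix.trace (gibbs β (H₀ + W') * H₀)).re + 2 * c) := by
  rcases N.eq_zero_or_pos with rfl | hN
  · simp only [relEntropy, trace_fin_zero, Complex.zero_re, mul_zero, zero_add]
    constructor <;> positivity
  have : NeZero N := ⟨hN.ne'⟩
  have hH : (H₀ + W).IsHermitian := hH₀.add hW
  have hH' : (H₀ + W').IsHermitian := hH₀.add hW'
  have hsum := relEntropy_gibbs_add_relEntropy_gibbs hH hH' β
  rw [add_sub_add_left_eq_sub] at hsum
  have hbound := abs_re_trace_mul_le (gibbs_posDef hH β).posSemidef hform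
  have hbound' := abs_re_trace_mul_le (gibbs_posDef hH' β).posSemidef hform
  rw [trace_gibbs hH, Complex.one_re, mul_one] at hbound
  rw [trace_gibbs hH', Complex.one_re, mul_one] at hbound'
  have hsum_le : relEntropy (gibbs β (H₀ + W)) (gibbs β (H₀ + W'))
      + relEntropy (gibbs β (H₀ + W')) (gibbs β (H₀ + W))
      ≤ β * (ε * (Matrix.trace (gibbs β (H₀ + W) * H₀)).re
            + ε * (Matrix.trace (gibbs β (H₀ + W') * H₀)).re + 2 * c) := by
    rw [hsum]
    exact mul_le_mul_of_nonneg_left (by linarith [abs_le.mp hbound, abs_le.mp hbound']) hβ.le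
  exact ⟨by linarith [relEntropy_gibbs_nonneg hH' hH β],
    by linarith [relEntropy_gibbs_nonneg hH hH' β]⟩

/-- **Relative entropy bound for Gibbs states under relative form perturbations.**
If `|⟨ψ,Δψ⟩| ≤ ε⟨ψ,H₀ψ⟩ + c‖ψ‖²` for all `ψ`, where `Δ = W − W′`, then both
`D(σ_β(H)‖σ_β(H′))` and `D(σ_β(H′)‖σ_β(H))` are at most
`β(ε Tr(σ_β(H)H₀) + ε Tr(σ_β(H′)H₀) + 2c)`. -/
theorem relEntropy_gibbs_perturbation_bound (N : ℕ)
    (H₀ W W' : Matrix (Fin N) (Fin N) ℂ)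
    (hH₀ : H₀.IsHermitian) (hW : W.IsHermitian) (hW' : W'.IsHermitian)
    (β : ℝ) (hβ : 0 < β) (ε c : ℝ) (hε : 0 ≤ ε) (hc : 0 ≤ c)
    (hform : ∀ ψ : Fin N → ℂ,
      |((star ψ) ⬝ᵥ ((W - W').mulVec ψ)).re|
        ≤ ε * ((star ψ) ⬝ᵥ (H₀.mulVec ψ)).re + c * ∑ i, ‖ψ i‖ ^ 2) :
    relEntropy (gibbs β (H₀ + W)) (gibbs β (H₀ + W'))
        ≤ β * (ε * (Matrix.trace (gibbs β (H₀ + W) * H₀)).re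
            + ε * (Matrix.trace (gibbs β (H₀ + W') * H₀)).re + 2 * c) ∧
      relEntropy (gibbs β (H₀ + W')) (gibbs β (H₀ + W))
        ≤ β * (ε * (Matrix.trace (gibbs β (H₀ + W) * H₀)).re
            + ε * (Matrix.trace (gibbs β (H₀ + W') * H₀)).re + 2 * c) :=
  relEntropy_gibbs_perturbation_bound_general N H₀ W W' hH₀ hW hW' β hβ ε c hc hform
end

section
/- Let ℋ be a complex Hilbert space, H₀ a bounded self-adjoint operator on ℋ, A a bounded operator on ℋ, J a finite index set, and for each j ∈ J let V_j be a bounded self-adjoint operator and α_j ∈ ℝ; set W := Σ_{j∈J} α_j V_j and H := H₀ + W. Assume there is a constant C ≥ 0 with ‖ [ V_j, e^{itH₀} A e^{−itH₀} ] ‖ ≤ C for all j ∈ J and all t ∈ ℝ. Let f : ℝ → ℂ be integrable with ∫_ℝ (1+|t|) |f(t)| dt < ∞, and define L(K) := ∫_ℝ f(t) e^{itK} A e^{−itK} dt (a Bochner integral converging in operator norm) for K = H₀ and K = H. Then ‖ L(H) − L(H₀) ‖ ≤ C · ( Σ_{j∈J} |α_j| ) · ∫_ℝ |t| |f(t)|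 dt. In particular, if Σ_{j∈J} |α_j| ≤ κ/n, then ‖L(H) − L(H₀)‖ ≤ (κ C / n) ∫_ℝ |t| |f(t)| dt. -/
open MeasureTheory

/-- The Heisenberg evolution `e^{itK} A e^{−itK}` of a bounded operator `A`
under a bounded Hamiltonian `K`. -/
noncomputable def heisenberg {ℋ : Type*} [NormedAddCommGroup ℋ]
    [InnerProductSpace ℂ ℋ] [CompleteSpace ℋ]
    (K A : ℋ →L[ℂ] ℋ) (t : ℝ) : ℋ →L[ℂ] ℋ :=
  NormedSpace.exp (((t : ℂ) * Complex.I) • K) * A *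
    NormedSpace.exp ((-((t : ℂ) * Complex.I)) • K)

/-!
Write `A₀(t) = e^{itH₀} A e^{−itH₀}` and `H = H₀ + W`. By Duhamel's formula,
`s ↦ e^{isH} A₀(t − s) e^{−isH}` runs from `A₀(t)` at `s = 0` to `e^{itH} A e^{−itH}` at `s = t`,
with derivative `e^{isH} i[W, A₀(t − s)] e^{−isH}`. Conjugation by unitaries preserves the norm
and `‖[W, A₀(r)]‖ ≤ C Σⱼ |αⱼ|`, so the two Heisenberg evolutions differ by at most
`C (Σⱼ |αⱼ|) |t|` at time `t`; integrating against `|f|` gives the estimate.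
-/

open Complex NormedSpace

section

variable {𝒜 : Type*} [NormedRing 𝒜] [NormedAlgebra ℂ 𝒜]

theorem commute_exp_smul_self (K : 𝒜) (c : ℂ) : Commute K (exp (c • K)) :=
  ((Commute.refl K).smul_right c).exp_right

theorem hasDerivAt_exp_ofReal_mul_smul [CompleteSpace 𝒜] (c : ℂ) (K : 𝒜) (s : ℝ) :
    HasDerivAt (fun s : ℝ => exp (((s : ℂ) * c) • K)) (exp (((s : ℂ) * c) • K) * (c • K)) s := by
  simpa only [Function.comp_def, ofRealCLM_apply, ofReal_one, one_smul, smul_smul] using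
    (hasDerivAt_exp_smul_const (c • K) (s : ℂ)).scomp s ofRealCLM.hasDerivAt

theorem exp_ofReal_mul_I_smul_mem_unitary [CompleteSpace 𝒜] [StarRing 𝒜] [ContinuousStar 𝒜]
    [StarModule ℂ 𝒜] {K : 𝒜} (hK : IsSelfAdjoint K) (t : ℝ) :
    exp (((t : ℂ) * I) • K) ∈ unitary 𝒜 := by
  let +nondep : NormedAlgebra ℚ 𝒜 := .restrictScalars ℚ ℂ 𝒜
  refine exp_mem_unitary_of_mem_skewAdjoint ?_
  rw [skewAdjoint.mem_iff, star_smul, star_def, map_mul, conj_ofReal, conj_I, hK.star_eq,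
    mul_neg, neg_smul]

end

theorem norm_commutator_sum_smul_le {𝕜 E ι : Type*} [NormedField 𝕜] [NormedRing E]
    [NormedAlgebra 𝕜 E] (s : Finset ι) (a : ι → 𝕜) (V : ι → E) (M : E) {C : ℝ}
    (hC : ∀ j ∈ s, ‖V j * M - M * V j‖ ≤ C) :
    ‖(∑ j ∈ s, a j • V j) * M - M * ∑ j ∈ s, a j • V j‖ ≤ (∑ j ∈ s, ‖a j‖) * C := by
  have hexpand : (∑ j ∈ s, a j • V j) * M - M * ∑ j ∈ s, a j • V j
      = ∑ j ∈ s, a j • (V j * M - M * V j) := by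
    simp only [Finset.sum_mul, Finset.mul_sum, ← Finset.sum_sub_distrib, smul_mul_assoc,
      mul_smul_comm, smul_sub]
  rw [hexpand, Finset.sum_mul]
  refine (norm_sum_le _ _).trans (Finset.sum_le_sum fun j hj => ?_)
  rw [norm_smul]
  exact mul_le_mul_of_nonneg_left (hC j hj) (norm_nonneg _)

theorem norm_integral_smul_sub_integral_smul_le {α 𝕜 E : Type*} [MeasurableSpace α]
    {μ : Measure α} [NormedField 𝕜] [NormedAddCommGroup E] [NormedSpace 𝕜 E] [NormedSpace ℝ E]
    {f : α → 𝕜} {F G : α → E} {φ : α → ℝ} {c : ℝ}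
    (hF : Integrable (fun x => f x • F x) μ) (hG : Integrable (fun x => f x • G x) μ)
    (hφ : Integrable (fun x => φ x * ‖f x‖) μ) (hFG : ∀ x, ‖F x - G x‖ ≤ c * φ x) :
    ‖∫ x, f x • F x ∂μ - ∫ x, f x • G x ∂μ‖ ≤ c * ∫ x, φ x * ‖f x‖ ∂μ := by
  rw [← integral_sub hF hG, ← integral_const_mul]
  refine norm_integral_le_of_norm_le (hφ.const_mul c) (.of_forall fun x => ?_)
  rw [← smul_sub, norm_smul]
  calc ‖f x‖ * ‖F x - G x‖ ≤ ‖f x‖ * (c * φ x) := by gcongr; exact hFG x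
    _ = c * (φ x * ‖f x‖) := by ring

section Heisenberg

variable {ℋ : Type*} [NormedAddCommGroup ℋ] [InnerProductSpace ℂ ℋ] [CompleteSpace ℋ]

theorem heisenberg_zero (K A : ℋ →L[ℂ] ℋ) : heisenberg K A 0 = A := by
  simp [heisenberg]

theorem norm_heisenberg {K : ℋ →L[ℂ] ℋ} (hK : IsSelfAdjoint K) (A : ℋ →L[ℂ] ℋ) (t : ℝ) :
    ‖heisenberg K A t‖ = ‖A‖ := by
  have hneg : -((t : ℂ) * I) = ((-t : ℝ) : ℂ) * I := by push_cast; ring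
  rw [heisenberg, hneg,
    CStarRing.norm_mul_mem_unitary _ (exp_ofReal_mul_I_smul_mem_unitary hK _),
    CStarRing.norm_mem_unitary_mul _ (exp_ofReal_mul_I_smul_mem_unitary hK _)]

theorem HasDerivAt.heisenberg (K : ℋ →L[ℂ] ℋ) {B : ℝ → ℋ →L[ℂ] ℋ} {B' : ℋ →L[ℂ] ℋ} {s : ℝ}
    (hB : HasDerivAt B B' s) :
    HasDerivAt (fun s => heisenberg K (B s) s)
      (heisenberg K (I • (K * B s - B s * K) + B') s) s := by
  have hU := hasDerivAt_exp_ofReal_mul_smul I K s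
  have hU' := hasDerivAt_exp_ofReal_mul_smul (-I) K s
  simp only [mul_neg] at hU'
  refine ((hU.mul hB).mul hU').congr_deriv ?_
  have hK := (commute_exp_smul_self K (-((s : ℂ) * I))).eq
  simp only [Pi.mul_apply, _root_.heisenberg, neg_smul I K, smul_sub, mul_neg, mul_sub, sub_mul,
    mul_add, add_mul, mul_smul_comm, smul_mul_assoc, mul_assoc, ← hK]
  abel

theorem hasDerivAt_heisenberg (K A : ℋ →L[ℂ] ℋ) (t : ℝ) :
    HasDerivAt (heisenberg K A) (I • (K * heisenberg K A t - heisenberg K A t * K)) t := by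
  refine ((hasDerivAt_const t A).heisenberg K).congr_deriv ?_
  have hU := (commute_exp_smul_self K ((t : ℂ) * I)).eq
  have hU' := (commute_exp_smul_self K (-((t : ℂ) * I))).eq
  simp only [heisenberg, add_zero, smul_sub, mul_sub, sub_mul, mul_smul_comm, smul_mul_assoc,
    mul_assoc, hU']
  simp only [← mul_assoc, hU]

theorem continuous_heisenberg (K A : ℋ →L[ℂ] ℋ) : Continuous (heisenberg K A) :=
  continuous_iff_continuousAt.2 fun t => (hasDerivAt_heisenberg K A t).continuousAt

theorem norm_heisenberg_add_sub_heisenberg_le {K W : ℋ →L[ℂ] ℋ} (hKW : IsSelfAdjoint (K + W))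
    (A : ℋ →L[ℂ] ℋ) {c : ℝ}
    (hc : ∀ s, ‖W * heisenberg K A s - heisenberg K A s * W‖ ≤ c) (t : ℝ) :
    ‖heisenberg (K + W) A t - heisenberg K A t‖ ≤ c * |t| := by
  have hA : ∀ s, HasDerivAt (fun s => heisenberg K A (t - s))
      (-(I • (K * heisenberg K A (t - s) - heisenberg K A (t - s) * K))) s := fun s => by
    simpa [Function.comp_def] using
      (hasDerivAt_heisenberg K A (t - s)).scomp s ((hasDerivAt_id s).const_sub t)
  have hDuhamel : ∀ s, HasDerivAt (fun s => heisenberg (K + W) (heisenberg K A (t - s)) s)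
      (heisenberg (K + W) (I • (W * heisenberg K A (t - s) - heisenberg K A (t - s) * W)) s)
      s := fun s => by
    refine ((hA s).heisenberg (K + W)).congr_deriv ?_
    congr 1
    simp only [add_mul, mul_add, smul_sub, smul_add]
    abel
  have hDuhamel_le : ∀ s,
      ‖heisenberg (K + W) (I • (W * heisenberg K A (t - s) - heisenberg K A (t - s) * W)) s‖
        ≤ c := fun s => by
    rw [norm_heisenberg hKW, norm_smul, norm_I, one_mul]
    exact hc (t - s)
  have := Convex.norm_image_sub_le_of_norm_hasDerivWithin_le
    (fun s _ => (hDuhamel s).hasDerivWithinAt) (fun s _ => hDuhamel_le s) convex_univ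
    (Set.mem_univ 0) (Set.mem_univ t)
  simpa [heisenberg_zero] using this

theorem integrable_smul_heisenberg {K : ℋ →L[ℂ] ℋ} (hK : IsSelfAdjoint K) (A : ℋ →L[ℂ] ℋ)
    {f : ℝ → ℂ} (hf : Integrable f) : Integrable (fun t => f t • heisenberg K A t) :=
  hf.smul_bdd ‖A‖ (continuous_heisenberg K A).aestronglyMeasurable
    (.of_forall fun t => (norm_heisenberg hK A t).le)

end Heisenberg

/-- **Locality estimate for filtered jump operators.** If
`W = Σ_j α_j V_j` with `‖[V_j, e^{itH₀} A e^{−itH₀}]‖ ≤ C` uniformly, and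
`L(K) = ∫ f(t) e^{itK} A e^{−itK} dt` for an integrable filter `f` with
`∫ (1+|t|)|f(t)| dt < ∞`, then
`‖L(H₀+W) − L(H₀)‖ ≤ C (Σ_j |α_j|) ∫ |t||f(t)| dt`; in particular if
`Σ_j |α_j| ≤ κ/n` then `‖L(H₀+W) − L(H₀)‖ ≤ (κC/n) ∫ |t||f(t)| dt`. -/
theorem filtered_jump_locality_estimate
    {ℋ : Type*} [NormedAddCommGroup ℋ] [InnerProductSpace ℂ ℋ] [CompleteSpace ℋ]
    (H₀ A : ℋ →L[ℂ] ℋ) (hH₀ : IsSelfAdjoint H₀)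
    {J : Type*} [Fintype J] (V : J → (ℋ →L[ℂ] ℋ)) (hV : ∀ j, IsSelfAdjoint (V j))
    (α : J → ℝ) (W : ℋ →L[ℂ] ℋ) (hW : W = ∑ j, ((α j : ℝ) : ℂ) • V j)
    (C : ℝ) (hC : 0 ≤ C)
    (hcomm : ∀ (j : J) (t : ℝ),
      ‖V j * heisenberg H₀ A t - heisenberg H₀ A t * V j‖ ≤ C)
    (f : ℝ → ℂ) (hf : Integrable f)
    (hf' : Integrable (fun t : ℝ => (1 + |t|) * ‖f t‖))
    (L : (ℋ →L[ℂ] ℋ) → (ℋ →L[ℂ] ℋ))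
    (hL : ∀ K : ℋ →L[ℂ] ℋ, L K = ∫ t : ℝ, f t • heisenberg K A t) :
    ‖L (H₀ + W) - L H₀‖ ≤ C * (∑ j, |α j|) * ∫ t : ℝ, |t| * ‖f t‖ ∧
      ∀ (n : ℕ) (κ : ℝ), 0 < n → (∑ j, |α j|) ≤ κ / n →
        ‖L (H₀ + W) - L H₀‖ ≤ (κ * C / n) * ∫ t : ℝ, |t| * ‖f t‖ := by
  have hH : IsSelfAdjoint (H₀ + W) := hH₀.add <| hW ▸ isSelfAdjoint_sum _ fun j _ =>
    IsSelfAdjoint.smul (conj_ofReal (α j)) (hV j)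
  have hWcomm (s : ℝ) :
      ‖W * heisenberg H₀ A s - heisenberg H₀ A s * W‖ ≤ C * ∑ j, |α j| := by
    rw [hW, mul_comm C]
    simpa only [norm_real, Real.norm_eq_abs] using
      norm_commutator_sum_smul_le _ (fun j => (α j : ℂ)) V _ fun j _ => hcomm j s
  have htf : Integrable (fun t : ℝ => |t| * ‖f t‖) :=
    hf'.mono' (continuous_abs.aestronglyMeasurable.mul hf.norm.aestronglyMeasurable)
      (.of_forall fun t => by
        rw [Real.norm_of_nonneg (by positivity)]
        gcongr
        exact le_add_of_nonneg_left zero_le_one)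
  have main : ‖L (H₀ + W) - L H₀‖ ≤ C * (∑ j, |α j|) * ∫ t : ℝ, |t| * ‖f t‖ := by
    rw [hL, hL]
    exact norm_integral_smul_sub_integral_smul_le (integrable_smul_heisenberg hH A hf)
      (integrable_smul_heisenberg hH₀ A hf) htf
      (norm_heisenberg_add_sub_heisenberg_le hH A hWcomm)
  refine ⟨main, fun n κ _ hκ => main.trans ?_⟩
  calc C * (∑ j, |α j|) * ∫ t : ℝ, |t| * ‖f t‖
      ≤ C * (κ / n) * ∫ t : ℝ, |t| * ‖f t‖ := by gcongr
    _ = κ * C / n * ∫ t : ℝ, |t| * ‖f t‖ := by ring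
end
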